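/- Let A ∈ 𝔄 have the expansion A = Σ_{𝔍,𝔍'∈𝒫₊} a_{𝔍𝔍'}·Θ(C_𝔍)∘C_{𝔍'}. Then A is reflection invariant, i.e. Θ(A) = A, if and only if the coefficient matrix is hermitian: a_{𝔍'𝔍} = conj(a_{𝔍𝔍'}) for all 𝔍, 𝔍' ∈ 𝒫₊. -/

import Mathlib

open ComplexOrder

noncomputable section

/-- The setting of the paper: a finite set `Λ` with a fixed-point free involution `ϑ`
exchanging `Λp` and its complement, the Clifford algebra (algebra of Majoranas) `carrier`
with self-adjoint generators `c i`, the global gauge automorphism `gauge`, the antilinear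
reflection `*`-automorphism `Θ`, a square root `ζ` of `-1`, the twisted product `twist`,
a choice `P` of orderings of the subsets of `Λp` (giving the bases
`{C J : J ∈ P}` of `𝔄₊` and `{Θ(C J) ∘ C J' : J, J' ∈ P}` of `𝔄`),
and the tracial state `Tr` picking out the coefficient of `1` in the basis expansion. -/
structure MajoranaSetting where
  Λ : Type
  [fintypeΛ : Fintype Λ]
  [deceqΛ : DecidableEq Λ]
  ϑ : Λ → Λ
  ϑ_invol : Function.Involutive ϑ
  ϑ_fixfree : ∀ i, ϑ i ≠ i
  Λp : Finset Λ
  ϑ_exch : ∀ i, i ∈ Λp ↔ ϑ i ∉ Λp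
  carrier : Type
  [nring : NormedRing carrier]
  [nalg : NormedAlgebra ℂ carrier]
  [cmpl : CompleteSpace carrier]
  [starring : StarRing carrier]
  [starmod : StarModule ℂ carrier]
  c : Λ → carrier
  c_star : ∀ i, star (c i) = c i
  clifford : ∀ i j, c i * c j + c j * c i = if i = j then (2 : carrier) else 0
  gauge : carrier ≃ₐ[ℂ] carrier
  gauge_c : ∀ i, gauge (c i) = - c i
  Θ : carrier → carrier
  Θ_add : ∀ x y, Θ (x + y) = Θ x + Θ y
  Θ_smul : ∀ (z : ℂ) (x), Θ (z • x) = (starRingEnd ℂ z) • Θ x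
  Θ_mul : ∀ x y, Θ (x * y) = Θ x * Θ y
  Θ_star : ∀ x, Θ (star x) = star (Θ x)
  Θ_invol : ∀ x, Θ (Θ x) = x
  Θ_c : ∀ i, Θ (c i) = c (ϑ i)
  ζ : ℂ
  ζ_sq : ζ ^ 2 = -1
  twist : carrier → carrier → carrier
  twist_add_left : ∀ x x' y, twist (x + x') y = twist x y + twist x' y
  twist_add_right : ∀ x y y', twist x (y + y') = twist x y + twist x y'
  twist_smul_left : ∀ (z : ℂ) (x y), twist (z • x) y = z • twist x y
  twist_smul_right : ∀ (z : ℂ) (x y), twist x (z • y) = z • twist x y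
  twist_spec : ∀ (Am Ap Bm Bp : carrier) (a b a' b' : ℕ),
    a ≤ 1 → b ≤ 1 → a' ≤ 1 → b' ≤ 1 →
    Am ∈ Algebra.adjoin ℂ (c '' {i | i ∉ Λp}) →
    Ap ∈ Algebra.adjoin ℂ (c '' {i | i ∈ Λp}) →
    Bm ∈ Algebra.adjoin ℂ (c '' {i | i ∉ Λp}) →
    Bp ∈ Algebra.adjoin ℂ (c '' {i | i ∈ Λp}) →
    gauge Am = ((-1 : ℂ) ^ a) • Am →
    gauge Ap = ((-1 : ℂ) ^ b) • Ap →
    gauge Bm = ((-1 : ℂ) ^ a') • Bm →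
    gauge Bp = ((-1 : ℂ) ^ b') • Bp →
    twist (Am * Ap) (Bm * Bp)
      = ζ ^ ((a * b' : ℤ) - (b * a' : ℤ)) • (Am * Ap * (Bm * Bp))
  P : Finset (List Λ)
  P_nodup : ∀ J ∈ P, J.Nodup
  P_sub : ∀ J ∈ P, ∀ i ∈ J, i ∈ Λp
  P_unique : ∀ s : Finset Λ, s ⊆ Λp → ∃! J, J ∈ P ∧ J.toFinset = s
  Tr : carrier →ₗ[ℂ] ℂ
  Tr_basis : ∀ J ∈ P, ∀ J' ∈ P,
    Tr (twist (Θ ((J.map c).prod)) ((J'.map c).prod))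
      = if J = [] ∧ J' = [] then 1 else 0
  basis_indep : LinearIndependent ℂ
    (fun p : {J // J ∈ P} × {J // J ∈ P} =>
      twist (Θ ((p.1.1.map c).prod)) ((p.2.1.map c).prod))
  basis_span : ∀ x : carrier, x ∈ Submodule.span ℂ
    (Set.range fun p : {J // J ∈ P} × {J // J ∈ P} =>
      twist (Θ ((p.1.1.map c).prod)) ((p.2.1.map c).prod))
  plus_span : ∀ x ∈ Algebra.adjoin ℂ (c '' {i | i ∈ Λp}),
    x ∈ Submodule.span ℂ (Set.range fun J : {J // J ∈ P} => ((J.1.map c).prod))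

attribute [instance] MajoranaSetting.fintypeΛ MajoranaSetting.deceqΛ
  MajoranaSetting.nring MajoranaSetting.nalg MajoranaSetting.cmpl
  MajoranaSetting.starring MajoranaSetting.starmod

namespace MajoranaSetting

variable (S : MajoranaSetting)

/-- The subalgebra `𝔄₊` generated by the Majoranas on the `+` side. -/
def Aplus : Subalgebra ℂ S.carrier := Algebra.adjoin ℂ (S.c '' {i | i ∈ S.Λp})

/-- The subalgebra `𝔄₋` generated by the Majoranas on the `-` side. -/
def Aminus : Subalgebra ℂ S.carrier := Algebra.adjoin ℂ (S.c '' {i | i ∉ S.Λp})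

/-- The monomial `C_𝔍 = c_{i₁} ⋯ c_{i_k}`. -/
def C (J : List S.Λ) : S.carrier := (J.map S.c).prod

/-- `q_𝔍 = (-1)^{k(k-1)/2}`. -/
def q (J : List S.Λ) : ℂ := (-1 : ℂ) ^ (J.length * (J.length - 1) / 2)

/-- `s_𝔍 = ζ^{k(k-1)/2}`. -/
def sgn (J : List S.Λ) : ℂ := S.ζ ^ (J.length * (J.length - 1) / 2)

/-- The exponential `e^x` in the (finite-dimensional) algebra `𝔄`. -/
def expm (x : S.carrier) : S.carrier := NormedSpace.exp x

/-- The Hamiltonian `H = -∑_{𝔍,𝔍' ∈ 𝒫₊} J_{𝔍𝔍'} Θ(C_𝔍) ∘ C_𝔍'`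
determined by coupling constants `Jc`. -/
def Ham (Jc : List S.Λ → List S.Λ → ℂ) : S.carrier :=
  - ∑ J ∈ S.P, ∑ J' ∈ S.P, Jc J J' • S.twist (S.Θ (S.C J)) (S.C J')

/-- The index type of the basis `{C J : J ∈ 𝒫₊}`. -/
abbrev PIdx := {J : List S.Λ // J ∈ S.P}

/-- The index type `𝒫₊ - {∅}` of couplings across the reflection plane. -/
abbrev PIdx0 := {p : S.PIdx // p.1 ≠ []}

/-- The full matrix of coupling constants. -/
def Jmat (Jc : List S.Λ → List S.Λ → ℂ) : Matrix S.PIdx S.PIdx ℂ :=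
  Matrix.of fun p q => Jc p.1 q.1

/-- The matrix `J⁰` of coupling constants across the reflection plane. -/
def Jmat0 (Jc : List S.Λ → List S.Λ → ℂ) : Matrix S.PIdx0 S.PIdx0 ℂ :=
  Matrix.of fun p q => Jc p.1.1 q.1.1

end MajoranaSetting

/-!
Θ permutes the basis: it sends `Θ(C_𝔍) ∘ C_𝔍'` to `Θ(C_𝔍') ∘ C_𝔍`. Indeed the twist factor
`ζ^{|𝔍||𝔍'|}` is conjugated to `(-ζ)^{|𝔍||𝔍'|}`, and the extra sign `(-1)^{|𝔍||𝔍'|}` is exactly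
the one produced by anticommuting `C_𝔍 ∈ 𝔄₊` past `C_{ϑ𝔍'} ∈ 𝔄₋`. Hence Θ acts on coefficient
matrices as the conjugate transpose, and linear independence of the basis finishes the proof.
-/

theorem List.mul_prod_of_anticomm {R : Type*} [Ring R] (x : R) (M : List R)
    (h : ∀ y ∈ M, x * y = -(y * x)) : x * M.prod = (-1) ^ M.length * (M.prod * x) := by
  induction M with
  | nil => simp
  | cons y M ih =>
    rw [List.prod_cons, ← mul_assoc, h y List.mem_cons_self, neg_mul, mul_assoc,
      ih fun z hz => h z (List.mem_cons_of_mem _ hz),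
      ← ((Commute.neg_one_left y).pow_left _).left_comm]
    simp [pow_succ, mul_assoc]

theorem List.prod_mul_prod_of_anticomm {R : Type*} [Ring R] (L M : List R)
    (h : ∀ x ∈ L, ∀ y ∈ M, x * y = -(y * x)) :
    L.prod * M.prod = (-1) ^ (L.length * M.length) * (M.prod * L.prod) := by
  induction L with
  | nil => simp
  | cons x L ih =>
    rw [List.prod_cons, mul_assoc, ih fun z hz => h z (List.mem_cons_of_mem _ hz),
      ← ((Commute.neg_one_left x).pow_left _).left_comm, ← mul_assoc x,
      List.mul_prod_of_anticomm x M (h x List.mem_cons_self)]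
    simp [add_mul, pow_add, mul_assoc]

namespace MajoranaSetting

variable {S : MajoranaSetting}

def Θₛₗ : S.carrier →ₛₗ[starRingEnd ℂ] S.carrier where
  toFun := S.Θ
  map_add' := S.Θ_add
  map_smul' := S.Θ_smul

lemma Θ_one : S.Θ 1 = 1 := by
  calc S.Θ 1 = S.Θ 1 * S.Θ (S.Θ 1) := by rw [S.Θ_invol, mul_one]
    _ = 1 := by rw [← S.Θ_mul, one_mul, S.Θ_invol]

lemma Θ_C (J : List S.Λ) : S.Θ (S.C J) = S.C (J.map S.ϑ) := by
  induction J with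
  | nil => exact Θ_one
  | cons i J ih => simp only [C, List.map_cons, List.prod_cons, S.Θ_mul, S.Θ_c] at ih ⊢; rw [ih]

lemma gauge_C (J : List S.Λ) : S.gauge (S.C J) = (-1 : ℂ) ^ (J.length % 2) • S.C J := by
  rw [← neg_one_pow_eq_pow_mod_two]
  induction J with
  | nil => simp [C]
  | cons i J ih =>
    simp only [C, List.map_cons, List.prod_cons, map_mul, S.gauge_c, List.length_cons] at ih ⊢
    rw [ih, mul_smul_comm, neg_mul, pow_succ, mul_neg_one, neg_smul, smul_neg]

lemma C_mem_adjoin {s : Set S.Λ} {J : List S.Λ} (h : ∀ i ∈ J, i ∈ s) :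
    S.C J ∈ Algebra.adjoin ℂ (S.c '' s) :=
  Subalgebra.list_prod_mem _ fun _ hx => by
    obtain ⟨i, hi, rfl⟩ := List.mem_map.mp hx
    exact Algebra.subset_adjoin (Set.mem_image_of_mem _ (h i hi))

lemma C_mul_C_of_disjoint {J M : List S.Λ} (h : ∀ i ∈ J, i ∉ M) :
    S.C J * S.C M = (-1 : ℂ) ^ (J.length * M.length) • (S.C M * S.C J) := by
  have anticomm : ∀ x ∈ J.map S.c, ∀ y ∈ M.map S.c, x * y = -(y * x) := by
    simp only [List.mem_map]
    rintro _ ⟨i, hi, rfl⟩ _ ⟨j, hj, rfl⟩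
    have hij : i ≠ j := fun e => h i hi (e ▸ hj)
    have hc := S.clifford i j
    rw [if_neg hij] at hc
    exact eq_neg_of_add_eq_zero_left hc
  rw [C, C, List.prod_mul_prod_of_anticomm _ _ anticomm, Algebra.smul_def]
  simp

lemma conj_ζ : starRingEnd ℂ S.ζ = -S.ζ := by
  have h : (S.ζ - Complex.I) * (S.ζ + Complex.I) = 0 := by
    linear_combination S.ζ_sq - Complex.I_sq
  rcases mul_eq_zero.mp h with h | h
  · rw [sub_eq_zero.mp h, Complex.conj_I]
  · rw [eq_neg_of_add_eq_zero_left h, map_neg, Complex.conj_I, neg_neg]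

lemma twist_of_mem_Aminus_of_mem_Aplus {x y : S.carrier} {m n : ℕ} (hm : m ≤ 1) (hn : n ≤ 1)
    (hx : x ∈ S.Aminus) (hy : y ∈ S.Aplus)
    (hgx : S.gauge x = (-1 : ℂ) ^ m • x) (hgy : S.gauge y = (-1 : ℂ) ^ n • y) :
    S.twist x y = S.ζ ^ (m * n) • (x * y) := by
  have h := S.twist_spec x 1 1 y m 0 0 n hm zero_le_one zero_le_one hn hx
    (Subalgebra.one_mem _) (Subalgebra.one_mem _) hy hgx (by simp) (by simp) hgy
  simpa only [mul_one, one_mul, mul_zero, Nat.cast_zero, sub_zero, ← Nat.cast_mul,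
    zpow_natCast] using h

lemma twist_basis {J J' : List S.Λ} (hJ : ∀ i ∈ J, i ∈ S.Λp) (hJ' : ∀ i ∈ J', i ∈ S.Λp) :
    S.twist (S.Θ (S.C J)) (S.C J')
      = S.ζ ^ (J.length % 2 * (J'.length % 2)) • (S.Θ (S.C J) * S.C J') := by
  rw [Θ_C]
  refine twist_of_mem_Aminus_of_mem_Aplus (Nat.lt_succ_iff.mp (Nat.mod_lt _ two_pos))
    (Nat.lt_succ_iff.mp (Nat.mod_lt _ two_pos)) (C_mem_adjoin ?_) (C_mem_adjoin hJ')
    (by rw [gauge_C, List.length_map]) (gauge_C J')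
  simp only [List.mem_map]
  rintro _ ⟨i, hi, rfl⟩
  exact (S.ϑ_exch i).mp (hJ i hi)

lemma Θ_twist_basis {J J' : List S.Λ} (hJ : ∀ i ∈ J, i ∈ S.Λp) (hJ' : ∀ i ∈ J', i ∈ S.Λp) :
    S.Θ (S.twist (S.Θ (S.C J)) (S.C J')) = S.twist (S.Θ (S.C J')) (S.C J) := by
  set n := J.length % 2 * (J'.length % 2)
  have hsign : (-1 : ℂ) ^ (J.length * J'.length) = (-1) ^ n := by
    rw [neg_one_pow_eq_pow_mod_two, Nat.mul_mod, ← neg_one_pow_eq_pow_mod_two]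
  have disjoint : ∀ i ∈ J, i ∉ J'.map S.ϑ := by
    simp only [List.mem_map, not_exists, not_and]
    rintro i hi j hj rfl
    exact (S.ϑ_exch j).mp (hJ' j hj) (hJ _ hi)
  rw [twist_basis hJ hJ', twist_basis hJ' hJ, S.Θ_smul, S.Θ_mul, S.Θ_invol, Θ_C J',
    C_mul_C_of_disjoint disjoint, List.length_map, hsign, smul_smul, map_pow, conj_ζ,
    ← mul_pow, mul_comm (J'.length % 2)]
  congr 2
  ring

lemma sum_P_P_eq_sum_PIdx {M : Type*} [AddCommMonoid M] (f : List S.Λ → List S.Λ → M) :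
    ∑ J ∈ S.P, ∑ J' ∈ S.P, f J J' = ∑ p : S.PIdx × S.PIdx, f p.1 p.2 := by
  rw [Fintype.sum_prod_type, ← Finset.sum_coe_sort S.P]
  simp only [← Finset.sum_coe_sort S.P]

lemma coeffs_eq_of_sum_eq {x y : List S.Λ → List S.Λ → ℂ}
    (h : ∑ J ∈ S.P, ∑ J' ∈ S.P, x J J' • S.twist (S.Θ (S.C J)) (S.C J')
      = ∑ J ∈ S.P, ∑ J' ∈ S.P, y J J' • S.twist (S.Θ (S.C J)) (S.C J')) :
    ∀ J ∈ S.P, ∀ J' ∈ S.P, x J J' = y J J' := by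
  intro J hJ J' hJ'
  rw [← sub_eq_zero, ← Finset.sum_sub_distrib] at h
  simp only [← Finset.sum_sub_distrib, ← sub_smul, sum_P_P_eq_sum_PIdx] at h
  exact sub_eq_zero.mp (Fintype.linearIndependent_iff.mp S.basis_indep _ h (⟨J, hJ⟩, ⟨J', hJ'⟩))

lemma Θ_sum_basis (a : List S.Λ → List S.Λ → ℂ) :
    S.Θ (∑ J ∈ S.P, ∑ J' ∈ S.P, a J J' • S.twist (S.Θ (S.C J)) (S.C J'))
      = ∑ J ∈ S.P, ∑ J' ∈ S.P, starRingEnd ℂ (a J' J) • S.twist (S.Θ (S.C J)) (S.C J') := by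
  change Θₛₗ _ = _
  simp only [map_sum, map_smulₛₗ]
  rw [Finset.sum_comm]
  refine Finset.sum_congr rfl fun J hJ => Finset.sum_congr rfl fun J' hJ' => ?_
  exact congrArg _ (Θ_twist_basis (S.P_sub J' hJ') (S.P_sub J hJ))

end MajoranaSetting

/-- `A = ∑_{𝔍,𝔍'∈𝒫₊} a_{𝔍𝔍'} Θ(C_𝔍)∘C_𝔍'` is reflection invariant
iff the coefficient matrix is hermitian. -/
theorem reflection_invariant_iff_hermitian_coeffs (S : MajoranaSetting)
    (a : List S.Λ → List S.Λ → ℂ) (A : S.carrier)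
    (hA : A = ∑ J ∈ S.P, ∑ J' ∈ S.P, a J J' • S.twist (S.Θ (S.C J)) (S.C J')) :
    S.Θ A = A ↔ ∀ J ∈ S.P, ∀ J' ∈ S.P, a J' J = starRingEnd ℂ (a J J') := by
  rw [hA, MajoranaSetting.Θ_sum_basis]
  constructor
  · intro h J hJ J' hJ'
    exact (MajoranaSetting.coeffs_eq_of_sum_eq h J' hJ' J hJ).symm
  · intro h
    refine Finset.sum_congr rfl fun J hJ => Finset.sum_congr rfl fun J' hJ' => ?_
    rw [h J' hJ' J hJ]
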